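/- arXiv:1906.05824 — 5 statements merged into one kernel-verified Lean document; each statement's English description precedes it below -/
import Mathlib

section
/- Let (U, 𝓑) be a measurable space in which all singletons are measurable, S ⊆ ℝ^r, and A, B : S × U → ℝ measurable in the second argument with B(α,u) < 0 for all (α,u) ∈ S × U. Suppose the test function C(α,u) = A(α,u)/B(α,u) attains its global maximum over S × U at a point (α*, u*). Then for every α ∈ S and every probability measure Ψ on (U, 𝓑) such that A(α,·) and B(α,·) are Ψ-integrable, one has I_α(Ψ) = (∫_U A(α,u) dΨ(u)) / (∫_U B(α,u) dΨ(u)) ≤ A(α*,u*)/B(α*,u*), and I_{α*}(δ_{u*}) = A(α*,u*)/B(α*,u*); hence the maximum of I_α(Ψ) is attained at (α*, δ_{u*}). -/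
open MeasureTheory

section

variable {α : Type*} [MeasurableSpace α] {μ : Measure α} [NeZero μ] {f g : α → ℝ}

theorem integral_neg_of_forall_neg (hg : Integrable g μ) (hneg : ∀ x, g x < 0) :
    ∫ x, g x ∂μ < 0 := by
  have hsupp : Function.support (fun x ↦ -g x) = Set.univ :=
    Set.eq_univ_of_forall fun x ↦ (neg_pos.2 (hneg x)).ne'
  have hpos : 0 < ∫ x, -g x ∂μ :=
    (integral_pos_iff_support_of_nonneg (fun x ↦ (neg_pos.2 (hneg x)).le) hg.neg).2
      (by simp [hsupp, NeZero.ne μ])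
  rw [integral_neg] at hpos
  linarith

/-- Where `g < 0`, the bound `f / g ≤ c` is the linear inequality `c * g ≤ f`, which integrates. -/
theorem integral_div_integral_le_of_forall_div_le {c : ℝ} (hf : Integrable f μ)
    (hg : Integrable g μ) (hneg : ∀ x, g x < 0) (hle : ∀ x, f x / g x ≤ c) :
    (∫ x, f x ∂μ) / (∫ x, g x ∂μ) ≤ c := by
  rw [div_le_iff_of_neg (integral_neg_of_forall_neg hg hneg), ← integral_const_mul]
  exact integral_mono (hg.const_mul c) hf fun x ↦ (div_le_iff_of_neg (hneg x)).1 (hle x)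

end

theorem stmt_5_general {r : ℕ} {U : Type*} [MeasurableSpace U]
    (hsing : ∀ u : U, MeasurableSet ({u} : Set U))
    (S : Set (Fin r → ℝ)) (A B : (Fin r → ℝ) → U → ℝ)
    (hB : ∀ α ∈ S, ∀ u : U, B α u < 0)
    (αs : Fin r → ℝ) (us : U)
    (hext : ∀ α ∈ S, ∀ u : U, A α u / B α u ≤ A αs us / B αs us) :
    (∀ α ∈ S, ∀ Ψ : Measure U, IsProbabilityMeasure Ψ →
        Integrable (A α) Ψ → Integrable (B α) Ψ →
        (∫ u, A α u ∂Ψ) / (∫ u, B α u ∂Ψ) ≤ A αs us / B αs us) ∧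
    (∫ u, A αs u ∂(Measure.dirac us)) / (∫ u, B αs u ∂(Measure.dirac us))
      = A αs us / B αs us := by
  have : MeasurableSingletonClass U := ⟨hsing⟩
  refine ⟨fun α hα Ψ _ hAint hBint ↦ ?_, by simp only [integral_dirac]⟩
  exact integral_div_integral_le_of_forall_div_le hAint hBint (hB α hα) (hext α hα)

/-- Theorem 1 (max assertion, B strictly neg): if the test function
C(α,u) = A(α,u)/B(α,u) attains its global max over S × U at (αs, us), then the
linear-fractional integral functional I_α(Ψ) is bounded by C(αs,us) over all α ∈ S and
admissible probability measures Ψ, and the bound is attained at (αs, Measure.dirac us). -/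
theorem stmt_5 {r : ℕ} {U : Type*} [MeasurableSpace U]
    (hsing : ∀ u : U, MeasurableSet ({u} : Set U))
    (S : Set (Fin r → ℝ)) (A B : (Fin r → ℝ) → U → ℝ)
    (hAmeas : ∀ α ∈ S, Measurable (A α)) (hBmeas : ∀ α ∈ S, Measurable (B α))
    (hB : ∀ α ∈ S, ∀ u : U, B α u < 0)
    (αs : Fin r → ℝ) (us : U) (hαs : αs ∈ S)
    (hext : ∀ α ∈ S, ∀ u : U, A α u / B α u ≤ A αs us / B αs us) :
    (∀ α ∈ S, ∀ Ψ : Measure U, IsProbabilityMeasure Ψ →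
        Integrable (A α) Ψ → Integrable (B α) Ψ →
        (∫ u, A α u ∂Ψ) / (∫ u, B α u ∂Ψ) ≤ A αs us / B αs us) ∧
    (∫ u, A αs u ∂(Measure.dirac us)) / (∫ u, B αs u ∂(Measure.dirac us))
      = A αs us / B αs us :=
  stmt_5_general hsing S A B hB αs us hext
end

section
/- Let (U, 𝓑) be a measurable space in which all singletons are measurable, S ⊆ ℝ^r, and A, B : S × U → ℝ measurable in the second argument with B(α,u) > 0 for all (α,u) ∈ S × U. Suppose the test function C(α,u) = A(α,u)/B(α,u) attains its global minimum over S × U at a point (α*, u*), i.e. A(α,u)/B(α,u) ≥ A(α*,u*)/B(α*,u*) for all (α,u) ∈ S × U. Then for every α ∈ S and every probability measure Ψ on (U, 𝓑) such that A(α,·) and B(α,·) are Ψ-integrable, one has I_α(Ψ) = (∫_U A(α,u) dΨ(u)) / (∫_U B(α,u) dΨ(u)) ≥ A(α*,u*)/B(α*,u*), and I_{α*}(δ_{u*}) = A(α*,u*)/B(α*,u*); hence the minimum of I_α(Ψ) over α ∈ S and admissible probability measures Ψ exists and is attained at the pair (α*, δ_{u*}). -/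
open MeasureTheory

/-! Since `B > 0`, the minimality of `c = A(α*,u*)/B(α*,u*)` is the pointwise inequality
`c • B(α,·) ≤ A(α,·)`; integrating it against `Ψ` and dividing by `∫ B(α,·) dΨ > 0` gives
`c ≤ I_α(Ψ)`. At `δ_{u*}` both integrals are point evaluations. -/

section

variable {X : Type*} [MeasurableSpace X] {μ : Measure X} [NeZero μ] {f g : X → ℝ}

theorem integral_pos_of_forall_pos (hf : ∀ x, 0 < f x) (hfi : Integrable f μ) :
    0 < ∫ x, f x ∂μ := by
  rw [integral_pos_iff_support_of_nonneg (fun x ↦ (hf x).le) hfi,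
    Function.support_eq_univ fun x ↦ (hf x).ne']
  exact Measure.measure_univ_pos.2 (NeZero.ne μ)

theorem le_integral_div_integral_of_forall_le_div {c : ℝ} (hg : ∀ x, 0 < g x)
    (hfi : Integrable f μ) (hgi : Integrable g μ) (hc : ∀ x, c ≤ f x / g x) :
    c ≤ (∫ x, f x ∂μ) / ∫ x, g x ∂μ := by
  rw [le_div_iff₀ (integral_pos_of_forall_pos hg hgi)]
  calc c * ∫ x, g x ∂μ = ∫ x, c * g x ∂μ := (integral_const_mul c _).symm
    _ ≤ ∫ x, f x ∂μ :=
      integral_mono (hgi.const_mul c) hfi fun x ↦ (le_div_iff₀ (hg x)).1 (hc x)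

end

theorem stmt_6_general {r : ℕ} {U : Type*} [MeasurableSpace U]
    (hsing : ∀ u : U, MeasurableSet ({u} : Set U))
    (S : Set (Fin r → ℝ)) (A B : (Fin r → ℝ) → U → ℝ)
    (hB : ∀ α ∈ S, ∀ u : U, 0 < B α u)
    (αs : Fin r → ℝ) (us : U)
    (hext : ∀ α ∈ S, ∀ u : U, A αs us / B αs us ≤ A α u / B α u) :
    (∀ α ∈ S, ∀ Ψ : Measure U, IsProbabilityMeasure Ψ →
        Integrable (A α) Ψ → Integrable (B α) Ψ →
        A αs us / B αs us ≤ (∫ u, A α u ∂Ψ) / (∫ u, B α u ∂Ψ)) ∧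
    (∫ u, A αs u ∂(Measure.dirac us)) / (∫ u, B αs u ∂(Measure.dirac us))
      = A αs us / B αs us := by
  have : MeasurableSingletonClass U := ⟨hsing⟩
  refine ⟨fun α hα Ψ _ hAi hBi ↦ ?_, by rw [integral_dirac, integral_dirac]⟩
  exact le_integral_div_integral_of_forall_le_div (hB α hα) hAi hBi (hext α hα)

/-- Theorem 1 (min assertion, B strictly pos): if the test function
C(α,u) = A(α,u)/B(α,u) attains its global min over S × U at (αs, us), then the
linear-fractional integral functional I_α(Ψ) is bounded by C(αs,us) over all α ∈ S and
admissible probability measures Ψ, and the bound is attained at (αs, Measure.dirac us). -/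
theorem stmt_6 {r : ℕ} {U : Type*} [MeasurableSpace U]
    (hsing : ∀ u : U, MeasurableSet ({u} : Set U))
    (S : Set (Fin r → ℝ)) (A B : (Fin r → ℝ) → U → ℝ)
    (hAmeas : ∀ α ∈ S, Measurable (A α)) (hBmeas : ∀ α ∈ S, Measurable (B α))
    (hB : ∀ α ∈ S, ∀ u : U, 0 < B α u)
    (αs : Fin r → ℝ) (us : U) (hαs : αs ∈ S)
    (hext : ∀ α ∈ S, ∀ u : U, A αs us / B αs us ≤ A α u / B α u) :
    (∀ α ∈ S, ∀ Ψ : Measure U, IsProbabilityMeasure Ψ →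
        Integrable (A α) Ψ → Integrable (B α) Ψ →
        A αs us / B αs us ≤ (∫ u, A α u ∂Ψ) / (∫ u, B α u ∂Ψ)) ∧
    (∫ u, A αs u ∂(Measure.dirac us)) / (∫ u, B αs u ∂(Measure.dirac us))
      = A αs us / B αs us :=
  stmt_6_general hsing S A B hB αs us hext
end

section
/- Let (U, 𝓑) be a measurable space in which all singletons are measurable, S ⊆ ℝ^r, and A, B : S × U → ℝ measurable in the second argument with B(α,u) > 0 for all (α,u) ∈ S × U. Suppose the test function C(α,u) = A(α,u)/B(α,u) attains its global maximum over S × U at a point (α*, u*). Then the supremum of I_α(Ψ) over all α ∈ S and all probability measures Ψ on (U, 𝓑) for which A(α,·) and B(α,·) are Ψ-integrable equals the supremum of I_α(δ_u) over all α ∈ S and all points u ∈ U, and both equal the global maximum A(α*,u*)/B(α*,u*) of the test function: sup_{(α,Ψ)} I_α(Ψ) = sup_{(α,u) ∈ S × U} I_α(δ_u) = max_{(α,u) ∈ S × U} A(α,u)/B(α,u) = A(α*,u*)/B(α*,u*). -/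
/-!
Since `B > 0`, the bound `A ≤ M * B` with `M = A(α*, u*) / B(α*, u*)` integrates to
`∫ A ≤ M * ∫ B` against any probability measure, so every value of `I_α` is at most `M`;
and `M` itself is attained, at `α*` and the Dirac measure `δ_{u*}`.
-/

open MeasureTheory

section RatioOfIntegrals

variable {X : Type*} [MeasurableSpace X] {μ : Measure X} [NeZero μ] {f g : X → ℝ}

theorem integral_pos_of_forall_pos_s7 (hg : Integrable g μ) (hg_pos : ∀ x, 0 < g x) :
    0 < ∫ x, g x ∂μ := by
  have hsupp : Function.support g = Set.univ :=
    Set.eq_univ_of_forall fun x ↦ (hg_pos x).ne'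
  rw [integral_pos_iff_support_of_nonneg (fun x ↦ (hg_pos x).le) hg, hsupp,
    Measure.measure_univ_pos]
  exact NeZero.ne μ

theorem integral_div_integral_le {M : ℝ} (hf : Integrable f μ) (hg : Integrable g μ)
    (hg_pos : ∀ x, 0 < g x) (hM : ∀ x, f x / g x ≤ M) :
    (∫ x, f x ∂μ) / (∫ x, g x ∂μ) ≤ M := by
  have hfg : ∀ x, f x ≤ M * g x := fun x ↦ (div_le_iff₀ (hg_pos x)).1 (hM x)
  rw [div_le_iff₀ (integral_pos_of_forall_pos_s7 hg hg_pos), ← integral_const_mul]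
  exact integral_mono hf (hg.const_mul M) hfg

end RatioOfIntegrals

theorem stmt_7_general {r : ℕ} {U : Type*} [MeasurableSpace U]
    (hsing : ∀ u : U, MeasurableSet ({u} : Set U))
    (S : Set (Fin r → ℝ)) (A B : (Fin r → ℝ) → U → ℝ)
    (hB : ∀ α ∈ S, ∀ u : U, 0 < B α u)
    (αs : Fin r → ℝ) (us : U) (hαs : αs ∈ S)
    (hmax : ∀ α ∈ S, ∀ u : U, A α u / B α u ≤ A αs us / B αs us) :
    sSup {x : ℝ | ∃ α ∈ S, ∃ Ψ : Measure U, IsProbabilityMeasure Ψ ∧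
        Integrable (A α) Ψ ∧ Integrable (B α) Ψ ∧
        x = (∫ u, A α u ∂Ψ) / (∫ u, B α u ∂Ψ)}
      = A αs us / B αs us ∧
    sSup {x : ℝ | ∃ α ∈ S, ∃ u : U,
        x = (∫ v, A α v ∂(Measure.dirac u)) / (∫ v, B α v ∂(Measure.dirac u))}
      = A αs us / B αs us ∧
    sSup {x : ℝ | ∃ α ∈ S, ∃ u : U, x = A α u / B α u} = A αs us / B αs us := by
  have : MeasurableSingletonClass U := ⟨hsing⟩
  simp only [integral_dirac]
  refine ⟨IsGreatest.csSup_eq ⟨?_, ?_⟩, IsGreatest.csSup_eq ⟨⟨αs, hαs, us, rfl⟩, ?_⟩,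
    IsGreatest.csSup_eq ⟨⟨αs, hαs, us, rfl⟩, ?_⟩⟩
  · refine ⟨αs, hαs, Measure.dirac us, inferInstance, integrable_dirac (by simp),
      integrable_dirac (by simp), by simp only [integral_dirac]⟩
  · rintro _ ⟨α, hα, Ψ, _, hAint, hBint, rfl⟩
    exact integral_div_integral_le hAint hBint (hB α hα) (hmax α hα)
  all_goals rintro _ ⟨α, hα, u, rfl⟩; exact hmax α hα u

/-- Theorem 1, chain of equalities (maximum case, B strictly positive): if the test
function C(α,u) = A(α,u)/B(α,u) attains its global maximum over S × U at (αs, us), then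
sup over (α,Ψ) of I_α(Ψ) = sup over (α,u) of I_α(δ_u) = max of the test function
= A(αs,us)/B(αs,us). -/
theorem stmt_7 {r : ℕ} {U : Type*} [MeasurableSpace U]
    (hsing : ∀ u : U, MeasurableSet ({u} : Set U))
    (S : Set (Fin r → ℝ)) (A B : (Fin r → ℝ) → U → ℝ)
    (hAmeas : ∀ α ∈ S, Measurable (A α)) (hBmeas : ∀ α ∈ S, Measurable (B α))
    (hB : ∀ α ∈ S, ∀ u : U, 0 < B α u)
    (αs : Fin r → ℝ) (us : U) (hαs : αs ∈ S)
    (hmax : ∀ α ∈ S, ∀ u : U, A α u / B α u ≤ A αs us / B αs us) :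
    sSup {x : ℝ | ∃ α ∈ S, ∃ Ψ : Measure U, IsProbabilityMeasure Ψ ∧
        Integrable (A α) Ψ ∧ Integrable (B α) Ψ ∧
        x = (∫ u, A α u ∂Ψ) / (∫ u, B α u ∂Ψ)}
      = A αs us / B αs us ∧
    sSup {x : ℝ | ∃ α ∈ S, ∃ u : U,
        x = (∫ v, A α v ∂(Measure.dirac u)) / (∫ v, B α v ∂(Measure.dirac u))}
      = A αs us / B αs us ∧
    sSup {x : ℝ | ∃ α ∈ S, ∃ u : U, x = A α u / B α u} = A αs us / B αs us :=
  stmt_7_general hsing S A B hB αs us hαs hmax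
end

section
/- Let (U, 𝓑) be a measurable space in which all singletons are measurable, S ⊆ ℝ^r, and A, B : S × U → ℝ measurable in the second argument with B(α,u) > 0 for all (α,u) ∈ S × U. Suppose the test function C(α,u) = A(α,u)/B(α,u) is bounded below on S × U but does not attain its global minimum there. Then the linear-fractional integral functional is also bounded below, and inf over all α ∈ S and all probability measures Ψ on (U, 𝓑) (for which A(α,·), B(α,·) are Ψ-integrable) of I_α(Ψ) = inf over all α ∈ S and all points u ∈ U of I_α(δ_u) = inf_{(α,u) ∈ S × U} A(α,u)/B(α,u) > −∞. -/
/-!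
Every value `A α u / B α u` is attained by the functional at `Ψ = δ_u`. Conversely, if `m` is a
lower bound of `A / B`, then `m * B α ≤ A α` pointwise; integrating against a probability measure
and dividing by `∫ B α > 0` shows that `m` bounds the functional too. Hence the two sets of values
have the same lower bounds, and so the same infimum.
-/

open MeasureTheory

/-- In `ℝ` this holds with no side conditions, thanks to the junk values `sInf ∅ = 0` and
`sInf s = 0` for `s` unbounded below. -/
theorem Real.sSup_lowerBounds_eq_sInf (s : Set ℝ) : sSup (lowerBounds s) = sInf s := by
  rcases s.eq_empty_or_nonempty with rfl | hne
  · simp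
  by_cases hbdd : BddBelow s
  · exact csSup_lowerBounds_eq_csInf hbdd hne
  · rw [Real.sInf_of_not_bddBelow hbdd, Set.not_nonempty_iff_eq_empty.mp hbdd, Real.sSup_empty]

theorem Real.sInf_congr_lowerBounds {s t : Set ℝ} (h : lowerBounds s = lowerBounds t) :
    sInf s = sInf t := by
  rw [← Real.sSup_lowerBounds_eq_sInf, h, Real.sSup_lowerBounds_eq_sInf]

section LinearFractional

variable {U : Type*} [MeasurableSpace U] {f g : U → ℝ}

theorem integral_div_integral_dirac (hf : Measurable f) (hg : Measurable g) (u : U) :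
    (∫ v, f v ∂Measure.dirac u) / (∫ v, g v ∂Measure.dirac u) = f u / g u := by
  rw [integral_dirac' _ _ hf.stronglyMeasurable, integral_dirac' _ _ hg.stronglyMeasurable]

theorem Measurable.integrable_dirac (hf : Measurable f) (u : U) :
    Integrable f (Measure.dirac u) :=
  integrable_dirac' hf.stronglyMeasurable enorm_lt_top

theorem le_integral_div_integral {μ : Measure U} [NeZero μ] {m : ℝ}
    (hf : Integrable f μ) (hg : Integrable g μ) (hg_pos : ∀ u, 0 < g u)
    (hm : ∀ u, m ≤ f u / g u) :
    m ≤ (∫ u, f u ∂μ) / (∫ u, g u ∂μ) := by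
  have hsupport : Function.support g = Set.univ :=
    Set.eq_univ_of_forall fun u => (hg_pos u).ne'
  have hint_pos : 0 < ∫ u, g u ∂μ := by
    rw [integral_pos_iff_support_of_nonneg (fun u => (hg_pos u).le) hg, hsupport]
    exact pos_iff_ne_zero.mpr (NeZero.ne (μ Set.univ))
  have hpointwise : ∀ u, m * g u ≤ f u := fun u => (le_div_iff₀ (hg_pos u)).mp (hm u)
  rw [le_div_iff₀ hint_pos, ← integral_const_mul]
  exact integral_mono (hg.const_mul m) hf hpointwise

end LinearFractional

theorem stmt_9_general {r : ℕ} {U : Type*} [MeasurableSpace U]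
    (S : Set (Fin r → ℝ)) (A B : (Fin r → ℝ) → U → ℝ)
    (hAmeas : ∀ α ∈ S, Measurable (A α)) (hBmeas : ∀ α ∈ S, Measurable (B α))
    (hB : ∀ α ∈ S, ∀ u : U, 0 < B α u)
    (hbdd : BddBelow {x : ℝ | ∃ α ∈ S, ∃ u : U, x = A α u / B α u}) :
    BddBelow {x : ℝ | ∃ α ∈ S, ∃ Ψ : Measure U, IsProbabilityMeasure Ψ ∧
        Integrable (A α) Ψ ∧ Integrable (B α) Ψ ∧
        x = (∫ u, A α u ∂Ψ) / (∫ u, B α u ∂Ψ)} ∧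
    sInf {x : ℝ | ∃ α ∈ S, ∃ Ψ : Measure U, IsProbabilityMeasure Ψ ∧
        Integrable (A α) Ψ ∧ Integrable (B α) Ψ ∧
        x = (∫ u, A α u ∂Ψ) / (∫ u, B α u ∂Ψ)}
      = sInf {x : ℝ | ∃ α ∈ S, ∃ u : U, x = A α u / B α u} ∧
    sInf {x : ℝ | ∃ α ∈ S, ∃ u : U,
        x = (∫ v, A α v ∂(Measure.dirac u)) / (∫ v, B α v ∂(Measure.dirac u))}
      = sInf {x : ℝ | ∃ α ∈ S, ∃ u : U, x = A α u / B α u} := by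
  set C := {x : ℝ | ∃ α ∈ S, ∃ u : U, x = A α u / B α u}
  set P := {x : ℝ | ∃ α ∈ S, ∃ Ψ : Measure U, IsProbabilityMeasure Ψ ∧
      Integrable (A α) Ψ ∧ Integrable (B α) Ψ ∧ x = (∫ u, A α u ∂Ψ) / (∫ u, B α u ∂Ψ)}
  have hdirac : {x : ℝ | ∃ α ∈ S, ∃ u : U,
      x = (∫ v, A α v ∂(Measure.dirac u)) / (∫ v, B α v ∂(Measure.dirac u))} = C := by
    refine Set.ext fun x =>
      exists_congr fun α => and_congr_right fun hα => exists_congr fun u => ?_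
    rw [integral_div_integral_dirac (hAmeas α hα) (hBmeas α hα)]
  have hsub : C ⊆ P := by
    rintro x ⟨α, hα, u, rfl⟩
    exact ⟨α, hα, Measure.dirac u, inferInstance, (hAmeas α hα).integrable_dirac u,
      (hBmeas α hα).integrable_dirac u,
      (integral_div_integral_dirac (hAmeas α hα) (hBmeas α hα) u).symm⟩
  have hlb : lowerBounds C ⊆ lowerBounds P := by
    rintro m hm x ⟨α, hα, Ψ, hΨ, hAint, hBint, rfl⟩
    exact le_integral_div_integral hAint hBint (hB α hα) fun u => hm ⟨α, hα, u, rfl⟩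
  refine ⟨Set.Nonempty.mono hlb hbdd, ?_, by rw [hdirac]⟩
  exact Real.sInf_congr_lowerBounds ((lowerBounds_mono_set hsub).antisymm hlb)

/-- Lemma 2, relation (30): if the test function C(α,u) = A(α,u)/B(α,u) is bounded below
on S × U but does not attain its global minimum there, then the linear-fractional integral
functional is also bounded below, and
inf over (α,Ψ) of I_α(Ψ) = inf over (α,u) of I_α(δ_u) = inf over (α,u) of C(α,u) > -∞. -/
theorem stmt_9 {r : ℕ} {U : Type*} [MeasurableSpace U]
    (hsing : ∀ u : U, MeasurableSet ({u} : Set U))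
    (S : Set (Fin r → ℝ)) (A B : (Fin r → ℝ) → U → ℝ)
    (hAmeas : ∀ α ∈ S, Measurable (A α)) (hBmeas : ∀ α ∈ S, Measurable (B α))
    (hB : ∀ α ∈ S, ∀ u : U, 0 < B α u)
    (hbdd : BddBelow {x : ℝ | ∃ α ∈ S, ∃ u : U, x = A α u / B α u})
    (hnotattained : ¬ ∃ αs ∈ S, ∃ us : U,
        ∀ α ∈ S, ∀ u : U, A αs us / B αs us ≤ A α u / B α u) :
    BddBelow {x : ℝ | ∃ α ∈ S, ∃ Ψ : Measure U, IsProbabilityMeasure Ψ ∧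
        Integrable (A α) Ψ ∧ Integrable (B α) Ψ ∧
        x = (∫ u, A α u ∂Ψ) / (∫ u, B α u ∂Ψ)} ∧
    sInf {x : ℝ | ∃ α ∈ S, ∃ Ψ : Measure U, IsProbabilityMeasure Ψ ∧
        Integrable (A α) Ψ ∧ Integrable (B α) Ψ ∧
        x = (∫ u, A α u ∂Ψ) / (∫ u, B α u ∂Ψ)}
      = sInf {x : ℝ | ∃ α ∈ S, ∃ u : U, x = A α u / B α u} ∧
    sInf {x : ℝ | ∃ α ∈ S, ∃ u : U,
        x = (∫ v, A α v ∂(Measure.dirac u)) / (∫ v, B α v ∂(Measure.dirac u))}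
      = sInf {x : ℝ | ∃ α ∈ S, ∃ u : U, x = A α u / B α u} :=
  stmt_9_general S A B hAmeas hBmeas hB hbdd
end

section
/- Let (U, 𝓑) be a measurable space in which all singletons are measurable, S ⊆ ℝ^r nonempty, U nonempty, and A, B : S × U → ℝ measurable in the second argument with B(α,u) > 0 for all (α,u) ∈ S × U. Suppose the test function C(α,u) = A(α,u)/B(α,u) is bounded below on S × U but does not attain its global minimum there. Then for every ε > 0 there exist α⁻(ε) ∈ S and u⁻(ε) ∈ U such that, with δ_{u⁻(ε)} the degenerate probability measure concentrated at u⁻(ε) and m = inf over all α ∈ S and admissible probability measures Ψ of I_α(Ψ), one has m < I_{α⁻(ε)}(δ_{u⁻(ε)}) = A(α⁻(ε), u⁻(ε))/B(α⁻(ε), u⁻(ε)) < m + ε. -/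
/-!
Since `B > 0`, the pointwise bound `m₀ * B ≤ A` with `m₀ = inf C` integrates against any
probability measure to `m₀ ≤ I_α(Ψ)`, while Dirac measures realise every value of `C`; hence
`m = m₀`. As `m₀` is not attained, its `ε`-approximations from the values of `C` lie strictly
above it.
-/

open MeasureTheory

section LinearFractional

variable {ι U : Type*}

def testValues (S : Set ι) (A B : ι → U → ℝ) : Set ℝ :=
  {x | ∃ α ∈ S, ∃ u : U, x = A α u / B α u}

lemma sInf_testValues_notMem {S : Set ι} {A B : ι → U → ℝ}
    (hbdd : BddBelow (testValues S A B))
    (hnot : ¬ ∃ αs ∈ S, ∃ us : U, ∀ α ∈ S, ∀ u : U, A αs us / B αs us ≤ A α u / B α u) :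
    sInf (testValues S A B) ∉ testValues S A B := by
  rintro ⟨αs, hαs, us, hs⟩
  exact hnot ⟨αs, hαs, us, fun α hα u ↦ hs ▸ csInf_le hbdd ⟨α, hα, u, rfl⟩⟩

variable [MeasurableSpace U]

lemma integral_pos_of_forall_pos_s11 {μ : Measure U} [NeZero μ] {f : U → ℝ}
    (hf : Integrable f μ) (hpos : ∀ u, 0 < f u) : 0 < ∫ u, f u ∂μ := by
  rw [integral_pos_iff_support_of_nonneg (fun u ↦ (hpos u).le) hf,
    (Set.eq_univ_of_forall fun u ↦ (hpos u).ne' : Function.support f = Set.univ)]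
  exact Measure.measure_univ_pos.mpr (NeZero.ne μ)

lemma le_integral_div_integral_of_le_div {μ : Measure U} [NeZero μ] {f g : U → ℝ} {c : ℝ}
    (hf : Integrable f μ) (hg : Integrable g μ) (hg_pos : ∀ u, 0 < g u)
    (hc : ∀ u, c ≤ f u / g u) : c ≤ (∫ u, f u ∂μ) / ∫ u, g u ∂μ := by
  rw [le_div_iff₀ (integral_pos_of_forall_pos_s11 hg hg_pos), ← integral_const_mul]
  exact integral_mono (hg.const_mul c) hf fun u ↦ (le_div_iff₀ (hg_pos u)).mp (hc u)

/-- The values of `I_α(Ψ)` over admissible pairs `(α, Ψ)`. -/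
def admissibleValues (S : Set ι) (A B : ι → U → ℝ) : Set ℝ :=
  {x | ∃ α ∈ S, ∃ Ψ : Measure U, IsProbabilityMeasure Ψ ∧
    Integrable (A α) Ψ ∧ Integrable (B α) Ψ ∧ x = (∫ u, A α u ∂Ψ) / (∫ u, B α u ∂Ψ)}

variable {S : Set ι} {A B : ι → U → ℝ}

lemma testValues_subset_admissibleValues [MeasurableSingletonClass U] :
    testValues S A B ⊆ admissibleValues S A B := by
  rintro x ⟨α, hα, u, rfl⟩
  refine ⟨α, hα, Measure.dirac u, inferInstance, integrable_dirac enorm_lt_top,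
    integrable_dirac enorm_lt_top, ?_⟩
  simp only [integral_dirac]

lemma sInf_testValues_le_of_mem_admissibleValues (hB : ∀ α ∈ S, ∀ u, 0 < B α u)
    (hbdd : BddBelow (testValues S A B)) {x : ℝ} (hx : x ∈ admissibleValues S A B) :
    sInf (testValues S A B) ≤ x := by
  obtain ⟨α, hα, Ψ, _, hA, hB', rfl⟩ := hx
  exact le_integral_div_integral_of_le_div hA hB' (hB α hα)
    fun u ↦ csInf_le hbdd ⟨α, hα, u, rfl⟩

lemma sInf_admissibleValues_eq_sInf_testValues [MeasurableSingletonClass U]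
    (hne : (testValues S A B).Nonempty) (hB : ∀ α ∈ S, ∀ u, 0 < B α u)
    (hbdd : BddBelow (testValues S A B)) :
    sInf (admissibleValues S A B) = sInf (testValues S A B) :=
  le_antisymm
    (csInf_le_csInf ⟨_, fun _ ↦ sInf_testValues_le_of_mem_admissibleValues hB hbdd⟩ hne
      testValues_subset_admissibleValues)
    (le_csInf (hne.mono testValues_subset_admissibleValues)
      fun _ ↦ sInf_testValues_le_of_mem_admissibleValues hB hbdd)

end LinearFractional

theorem stmt_11_general {r : ℕ} {U : Type*} [MeasurableSpace U] [Nonempty U]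
    (hsing : ∀ u : U, MeasurableSet ({u} : Set U))
    (S : Set (Fin r → ℝ)) (hS : S.Nonempty) (A B : (Fin r → ℝ) → U → ℝ)
    (hB : ∀ α ∈ S, ∀ u : U, 0 < B α u)
    (hbdd : BddBelow {x : ℝ | ∃ α ∈ S, ∃ u : U, x = A α u / B α u})
    (hnotattained : ¬ ∃ αs ∈ S, ∃ us : U,
        ∀ α ∈ S, ∀ u : U, A αs us / B αs us ≤ A α u / B α u) :
    ∀ ε > (0 : ℝ), ∃ αm ∈ S, ∃ um : U,
      sInf {x : ℝ | ∃ α ∈ S, ∃ Ψ : Measure U, IsProbabilityMeasure Ψ ∧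
          Integrable (A α) Ψ ∧ Integrable (B α) Ψ ∧
          x = (∫ u, A α u ∂Ψ) / (∫ u, B α u ∂Ψ)}
        < (∫ v, A αm v ∂(Measure.dirac um)) / (∫ v, B αm v ∂(Measure.dirac um)) ∧
      (∫ v, A αm v ∂(Measure.dirac um)) / (∫ v, B αm v ∂(Measure.dirac um))
        = A αm um / B αm um ∧
      A αm um / B αm um
        < (sInf {x : ℝ | ∃ α ∈ S, ∃ Ψ : Measure U, IsProbabilityMeasure Ψ ∧
            Integrable (A α) Ψ ∧ Integrable (B α) Ψ ∧
            x = (∫ u, A α u ∂Ψ) / (∫ u, B α u ∂Ψ)}) + ε := by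
  have : MeasurableSingletonClass U := ⟨hsing⟩
  intro ε hε
  obtain ⟨α₀, hα₀⟩ := hS
  have hne : (testValues S A B).Nonempty := ⟨_, α₀, hα₀, Classical.arbitrary U, rfl⟩
  obtain ⟨_, ⟨αm, hαm, um, rfl⟩, hlt, hlt_add⟩ :=
    (isGLB_csInf hne hbdd).exists_between' (sInf_testValues_notMem hbdd hnotattained)
      (lt_add_of_pos_right _ hε)
  refine ⟨αm, hαm, um, ?_⟩
  change sInf (admissibleValues S A B) < _ ∧ _ ∧ _ < sInf (admissibleValues S A B) + ε
  rw [sInf_admissibleValues_eq_sInf_testValues hne hB hbdd, integral_dirac, integral_dirac]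
  exact ⟨hlt, rfl, hlt_add⟩

/-- Theorem 2, assertion 2 (relation (28)): if the test function C(α,u) = A(α,u)/B(α,u)
is bounded below on S × U but does not attain its global minimum there, then for every
ε > 0 there is a pair (α⁻(ε), u⁻(ε)) ∈ S × U such that, with
m = inf over (α,Ψ) of I_α(Ψ), one has m < I_{α⁻(ε)}(δ_{u⁻(ε)}) = C(α⁻(ε),u⁻(ε)) < m + ε. -/
theorem stmt_11 {r : ℕ} {U : Type*} [MeasurableSpace U] [Nonempty U]
    (hsing : ∀ u : U, MeasurableSet ({u} : Set U))
    (S : Set (Fin r → ℝ)) (hS : S.Nonempty) (A B : (Fin r → ℝ) → U → ℝ)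
    (hAmeas : ∀ α ∈ S, Measurable (A α)) (hBmeas : ∀ α ∈ S, Measurable (B α))
    (hB : ∀ α ∈ S, ∀ u : U, 0 < B α u)
    (hbdd : BddBelow {x : ℝ | ∃ α ∈ S, ∃ u : U, x = A α u / B α u})
    (hnotattained : ¬ ∃ αs ∈ S, ∃ us : U,
        ∀ α ∈ S, ∀ u : U, A αs us / B αs us ≤ A α u / B α u) :
    ∀ ε > (0 : ℝ), ∃ αm ∈ S, ∃ um : U,
      sInf {x : ℝ | ∃ α ∈ S, ∃ Ψ : Measure U, IsProbabilityMeasure Ψ ∧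
          Integrable (A α) Ψ ∧ Integrable (B α) Ψ ∧
          x = (∫ u, A α u ∂Ψ) / (∫ u, B α u ∂Ψ)}
        < (∫ v, A αm v ∂(Measure.dirac um)) / (∫ v, B αm v ∂(Measure.dirac um)) ∧
      (∫ v, A αm v ∂(Measure.dirac um)) / (∫ v, B αm v ∂(Measure.dirac um))
        = A αm um / B αm um ∧
      A αm um / B αm um
        < (sInf {x : ℝ | ∃ α ∈ S, ∃ Ψ : Measure U, IsProbabilityMeasure Ψ ∧
            Integrable (A α) Ψ ∧ Integrable (B α) Ψ ∧
            x = (∫ u, A α u ∂Ψ) / (∫ u, B α u ∂Ψ)}) + ε :=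
  stmt_11_general hsing S hS A B hB hbdd hnotattained
end
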